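/- Let f be a polynomial with Newton polytope equal to Δ_{n,2d}, full support L_{n,2d} = Δ_{n,2d} ∩ ℤ^n, written as f = Σ_{j=1}^s f_j where each f_j is a circuit polynomial with vertices among {0, 2d·e_1,…,2d·e_n}, distinct inner exponent β(j), and inner coefficient strictly smaller in absolute value than its circuit number: |f_{β(j)}| < Θ(f_j). Let g ∈ P_{n,2d} be any nonnegative polynomial of degree ≤ 2d. Set δ = min_j (Θ(f_j) − |f_{β(j)}|) and ε = min over non-vertex exponents α with g_α ≠ 0 of δ/(2|g_α|). Then f + ε·g is a sum of nonnegative circuit polynomials. -/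

import Mathlib

open MvPolynomial

/-- A circuit polynomial in `n` variables, supported in the scaled standard simplex
`Δ_{n,2d}`. -/
def IsCircuit (n d : ℕ) (p : MvPolynomial (Fin n) ℝ) : Prop :=
  ∃ (r : ℕ) (α : Fin (r + 1) → Fin n → ℕ) (β : Fin n → ℕ)
    (c : Fin (r + 1) → ℝ) (cβ : ℝ) (lam : Fin (r + 1) → ℝ),
    r ≤ n ∧
    (∀ j i, Even (α j i)) ∧
    AffineIndependent ℝ (fun j => (fun i => (α j i : ℝ)) : Fin (r + 1) → Fin n → ℝ) ∧
    (∀ j, 0 < c j) ∧ (∀ j, 0 < lam j) ∧ (∑ j, lam j = 1) ∧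
    (∀ i, (β i : ℝ) = ∑ j, lam j * (α j i : ℝ)) ∧
    (∀ j, ∑ i, α j i ≤ 2 * d) ∧
    p = (∑ j, monomial (Finsupp.equivFunOnFinite.symm (α j)) (c j))
          + monomial (Finsupp.equivFunOnFinite.symm β) cβ

/-- A sum of nonnegative circuit polynomials, all supported in `Δ_{n,2d}`. -/
def IsSONC (n d : ℕ) (p : MvPolynomial (Fin n) ℝ) : Prop :=
  ∃ (k : ℕ) (q : Fin k → MvPolynomial (Fin n) ℝ),
    (∀ i, IsCircuit n d (q i)) ∧
    (∀ i (x : Fin n → ℝ), 0 ≤ eval x (q i)) ∧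
    p = ∑ i, q i

/-!
Every exponent of `g` other than the vertices `0`, `2d·eᵢ` of `Δ_{n,2d}` lies in the support of
`f`, hence (full support, injectivity of `β`) is the inner exponent `β(j)` of exactly one circuit
`f_j`. The term `ε g_{β(j)}` is absorbed into the inner coefficient of `f_j`: since
`ε |g_{β(j)}| ≤ δ/2`, the new inner coefficient stays below the circuit number `Θ(f_j)`, and by
weighted AM–GM a circuit polynomial whose inner coefficient is bounded by its circuit number is
nonnegative. The remaining terms of `ε g` sit at the vertices, where a nonnegative `g` of degree
`≤ 2d` has nonnegative coefficients (restrict `g` to the `i`-th axis and let `t → ∞`); they are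
monomial squares, i.e. degenerate circuits.
-/

open Finset

theorem Polynomial.leadingCoeff_nonneg_of_eval_nonneg {P : Polynomial ℝ}
    (hP : ∀ t, 0 ≤ P.eval t) : 0 ≤ P.leadingCoeff := by
  by_contra! hneg
  rcases le_or_gt P.degree 0 with hdeg | hdeg
  · rw [Polynomial.eq_C_of_degree_le_zero hdeg, Polynomial.leadingCoeff_C] at hneg
    have := hP 0
    rw [Polynomial.eq_C_of_degree_le_zero hdeg, Polynomial.eval_C] at this
    linarith
  · obtain ⟨t, ht⟩ := ((P.tendsto_atBot_of_leadingCoeff_nonpos hdeg hneg.le).eventually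
      (Filter.eventually_lt_atBot 0)).exists
    exact (hP t).not_gt ht

namespace MvPolynomial

variable {σ R : Type*}

theorem coeff_aeval_piSingle_X [CommSemiring R] [DecidableEq σ] (g : MvPolynomial σ R) (i : σ)
    (N : ℕ) : (aeval (Pi.single i Polynomial.X : σ → Polynomial R) g).coeff N
      = g.coeff (Finsupp.single i N) := by
  induction g using MvPolynomial.induction_on' with
  | add p q hp hq => simp only [map_add, Polynomial.coeff_add, coeff_add, hp, hq]
  | monomial a c =>
    rw [aeval_monomial, coeff_monomial, Polynomial.algebraMap_eq]
    by_cases hax : ∃ m ≠ i, a m ≠ 0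
    · obtain ⟨m, hmi, ham⟩ := hax
      rw [Finsupp.prod, Finset.prod_eq_zero (Finsupp.mem_support_iff.mpr ham)
        (by rw [Pi.single_eq_of_ne hmi, zero_pow ham]), mul_zero, Polynomial.coeff_zero, if_neg]
      rintro rfl
      exact ham (Finsupp.single_eq_of_ne hmi)
    · push Not at hax
      obtain ⟨k, rfl⟩ : ∃ k, a = Finsupp.single i k := ⟨a i, Finsupp.ext fun m => by
        by_cases hm : m = i
        · subst hm; simp
        · rw [hax m hm, Finsupp.single_eq_of_ne hm]⟩
      rw [Finsupp.prod_single_index (by simp), Pi.single_eq_same,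
        Polynomial.coeff_C_mul_X_pow]
      simp only [(Finsupp.single_injective i).eq_iff, @eq_comm ℕ N]

theorem eval_aeval_piSingle_X [CommSemiring R] [DecidableEq σ] (g : MvPolynomial σ R) (i : σ)
    (t : R) : (aeval (Pi.single i Polynomial.X : σ → Polynomial R) g).eval t
      = eval (Pi.single i t) g := by
  have hpt : (fun m => Polynomial.aeval t ((Pi.single i Polynomial.X : σ → Polynomial R) m))
      = Pi.single i t := by
    funext m
    by_cases hm : m = i
    · subst hm; simp
    · simp [Pi.single_eq_of_ne hm]
  rw [← Polynomial.coe_aeval_eq_eval, ← AlgHom.comp_apply, comp_aeval, hpt, aeval_eq_eval]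

theorem coeff_single_nonneg_of_totalDegree_le {g : MvPolynomial σ ℝ} {N : ℕ}
    (hdeg : g.totalDegree ≤ N) (hg : ∀ x, 0 ≤ eval x g) (i : σ) :
    0 ≤ g.coeff (Finsupp.single i N) := by
  classical
  set P : Polynomial ℝ := aeval (Pi.single i Polynomial.X : σ → Polynomial ℝ) g
  have hPdeg : P.natDegree ≤ N := by
    refine Polynomial.natDegree_le_iff_coeff_eq_zero.mpr fun M hM => ?_
    rw [coeff_aeval_piSingle_X]
    refine coeff_eq_zero_of_totalDegree_lt (hdeg.trans_lt ?_)
    simpa [Finsupp.support_single i (by omega : M ≠ 0)] using hM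
  rw [← coeff_aeval_piSingle_X]
  rcases hPdeg.lt_or_eq with hlt | rfl
  · rw [Polynomial.coeff_eq_zero_of_natDegree_lt hlt]
  · exact Polynomial.leadingCoeff_nonneg_of_eval_nonneg fun t => by
      rw [eval_aeval_piSingle_X]; exact hg _

theorem eq_sum_monomial_add_sum_monomial [CommSemiring R]
    {p : MvPolynomial σ R} {T V : Finset (σ →₀ ℕ)} (hT : ∀ a, a ∈ T ↔ a ∈ p.support ∧ a ∉ V) :
    p = ∑ a ∈ T, monomial a (p.coeff a) + ∑ a ∈ V, monomial a (p.coeff a) := by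
  classical
  have hdisj : Disjoint T V := disjoint_left.mpr fun a haT => ((hT a).mp haT).2
  have hsub : p.support ⊆ T ∪ V := fun a ha => by
    by_cases haV : a ∈ V
    · exact mem_union_right _ haV
    · exact mem_union_left _ ((hT a).mpr ⟨ha, haV⟩)
  rw [← sum_union hdisj]
  conv_lhs => rw [p.as_sum]
  exact sum_subset hsub fun a _ ha => by rw [notMem_support_iff.mp ha, map_zero]

end MvPolynomial

theorem abs_add_mul_le_of_le_div {b t ε δ Θ : ℝ} (hε : 0 ≤ ε) (ht : t ≠ 0)
    (hεt : ε ≤ δ / (2 * |t|)) (hδ : δ ≤ Θ - |b|) : |b + ε * t| ≤ Θ := by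
  have ht_pos : 0 < |t| := abs_pos.mpr ht
  have hεt' : ε * |t| ≤ δ / 2 := by
    rw [le_div_iff₀ (by positivity)] at hεt
    linarith
  calc |b + ε * t| ≤ |b| + ε * |t| := by
        simpa only [abs_mul, abs_of_nonneg hε] using abs_add_le b (ε * t)
    _ ≤ Θ := by linarith [mul_nonneg hε ht_pos.le]

noncomputable def circuitNumber {ι : Type*} [Fintype ι] (c lam : ι → ℝ) : ℝ :=
  ∏ j, (c j / lam j) ^ lam j

noncomputable def circuitPoly {ι : Type*} [Fintype ι] {n : ℕ} (α : ι → Fin n → ℕ) (c : ι → ℝ)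
    (β : Fin n → ℕ) (cβ : ℝ) : MvPolynomial (Fin n) ℝ :=
  (∑ j, monomial (Finsupp.equivFunOnFinite.symm (α j)) (c j))
    + monomial (Finsupp.equivFunOnFinite.symm β) cβ

section Circuit

variable {ι : Type*} [Fintype ι] {n : ℕ}

theorem circuitNumber_mul_prod_rpow_le {c lam y : ι → ℝ} (hc : ∀ j, 0 ≤ c j)
    (hlam : ∀ j, 0 < lam j) (hsum : ∑ j, lam j = 1) (hy : ∀ j, 0 ≤ y j) :
    circuitNumber c lam * ∏ j, y j ^ lam j ≤ ∑ j, c j * y j :=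
  calc circuitNumber c lam * ∏ j, y j ^ lam j = ∏ j, (c j / lam j * y j) ^ lam j := by
        rw [circuitNumber, ← prod_mul_distrib]
        exact prod_congr rfl fun j _ =>
          (Real.mul_rpow (div_nonneg (hc j) (hlam j).le) (hy j)).symm
    _ ≤ ∑ j, lam j * (c j / lam j * y j) :=
        Real.geom_mean_le_arith_mean_weighted univ lam _ (fun j _ => (hlam j).le) hsum
          fun j _ => mul_nonneg (div_nonneg (hc j) (hlam j).le) (hy j)
    _ = ∑ j, c j * y j := sum_congr rfl fun j _ => by field_simp [(hlam j).ne']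

theorem prod_abs_pow_eq_prod_rpow_of_eq_sum_mul (x : Fin n → ℝ) {α : ι → Fin n → ℕ}
    {β : Fin n → ℕ} {lam : ι → ℝ} (hlam : ∀ j, 0 ≤ lam j)
    (hβ : ∀ i, (β i : ℝ) = ∑ j, lam j * α j i) :
    ∏ i, |x i| ^ β i = ∏ j, (∏ i, |x i| ^ α j i) ^ lam j := by
  calc ∏ i, |x i| ^ β i = ∏ i, ∏ j, |x i| ^ (lam j * α j i) := by
        refine prod_congr rfl fun i _ => ?_
        rw [← Real.rpow_natCast, hβ, Real.rpow_sum_of_nonneg (abs_nonneg _)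
          fun j _ => mul_nonneg (hlam j) (Nat.cast_nonneg _)]
    _ = ∏ j, (∏ i, |x i| ^ α j i) ^ lam j := by
        rw [prod_comm]
        refine prod_congr rfl fun j _ => ?_
        rw [← Real.finsetProd_rpow _ _ fun i _ => by positivity]
        refine prod_congr rfl fun i _ => ?_
        rw [← Real.rpow_natCast, ← Real.rpow_mul (abs_nonneg _), mul_comm]

theorem eval_circuitPoly (x : Fin n → ℝ) (α : ι → Fin n → ℕ) (c : ι → ℝ) (β : Fin n → ℕ)
    (cβ : ℝ) :
    eval x (circuitPoly α c β cβ) = ∑ j, c j * ∏ i, x i ^ α j i + cβ * ∏ i, x i ^ β i := by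
  simp [circuitPoly, eval_monomial, Finsupp.prod_fintype]

theorem circuitPoly_eval_nonneg {α : ι → Fin n → ℕ} {c lam : ι → ℝ} {β : Fin n → ℕ} {cβ : ℝ}
    (hα : ∀ j i, Even (α j i)) (hc : ∀ j, 0 ≤ c j) (hlam : ∀ j, 0 < lam j)
    (hsum : ∑ j, lam j = 1) (hβ : ∀ i, (β i : ℝ) = ∑ j, lam j * α j i)
    (hcβ : |cβ| ≤ circuitNumber c lam) (x : Fin n → ℝ) :
    0 ≤ eval x (circuitPoly α c β cβ) := by
  set y : ι → ℝ := fun j => ∏ i, x i ^ α j i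
  have hy : ∀ j, y j = ∏ i, |x i| ^ α j i := fun j =>
    prod_congr rfl fun i _ => ((hα j i).pow_abs (x i)).symm
  have hy_nonneg : ∀ j, 0 ≤ y j := fun j => by rw [hy]; positivity
  have habs : |∏ i, x i ^ β i| = ∏ j, y j ^ lam j := by
    simp only [abs_prod, abs_pow, hy]
    exact prod_abs_pow_eq_prod_rpow_of_eq_sum_mul x (fun j => (hlam j).le) hβ
  have hinner : -(circuitNumber c lam * ∏ j, y j ^ lam j) ≤ cβ * ∏ i, x i ^ β i := by
    rw [← habs]
    calc -(circuitNumber c lam * |∏ i, x i ^ β i|) ≤ -|cβ * ∏ i, x i ^ β i| := by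
          rw [abs_mul]; gcongr
      _ ≤ _ := neg_abs_le _
  rw [eval_circuitPoly]
  linarith [circuitNumber_mul_prod_rpow_le hc hlam hsum hy_nonneg]

end Circuit

namespace IsSONC

variable {n d : ℕ}

theorem of_isCircuit {p : MvPolynomial (Fin n) ℝ} (h : IsCircuit n d p)
    (hp : ∀ x, 0 ≤ eval x p) : IsSONC n d p :=
  ⟨1, fun _ => p, fun _ => h, fun _ => hp, by simp⟩

theorem zero : IsSONC n d 0 :=
  ⟨0, Fin.elim0, Fin.rec0, Fin.rec0, by simp⟩

theorem add {p q : MvPolynomial (Fin n) ℝ} (hp : IsSONC n d p) (hq : IsSONC n d q) :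
    IsSONC n d (p + q) := by
  obtain ⟨k, P, hP_circ, hP_nonneg, rfl⟩ := hp
  obtain ⟨l, Q, hQ_circ, hQ_nonneg, rfl⟩ := hq
  refine ⟨k + l, Fin.append P Q, Fin.addCases (by simpa using hP_circ) (by simpa using hQ_circ),
    Fin.addCases (by simpa using hP_nonneg) (by simpa using hQ_nonneg), ?_⟩
  simp [Fin.sum_univ_add]

theorem sum {ι : Type*} (s : Finset ι) {p : ι → MvPolynomial (Fin n) ℝ}
    (h : ∀ i ∈ s, IsSONC n d (p i)) : IsSONC n d (∑ i ∈ s, p i) :=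
  Finset.sum_induction p _ (fun _ _ => add) zero h

end IsSONC

theorem isSONC_circuitPoly {n d r : ℕ} (hr : r ≤ n) {α : Fin (r + 1) → Fin n → ℕ}
    {c lam : Fin (r + 1) → ℝ} {β : Fin n → ℕ} {cβ : ℝ} (hα : ∀ j i, Even (α j i))
    (hα_indep : AffineIndependent ℝ fun j i => (α j i : ℝ)) (hc : ∀ j, 0 < c j)
    (hlam : ∀ j, 0 < lam j) (hsum : ∑ j, lam j = 1) (hβ : ∀ i, (β i : ℝ) = ∑ j, lam j * α j i)
    (hα_deg : ∀ j, ∑ i, α j i ≤ 2 * d) (hcβ : |cβ| ≤ circuitNumber c lam) :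
    IsSONC n d (circuitPoly α c β cβ) :=
  .of_isCircuit ⟨r, α, β, c, cβ, lam, hr, hα, hα_indep, hc, hlam, hsum, hβ, hα_deg, rfl⟩
    (circuitPoly_eval_nonneg hα (fun j => (hc j).le) hlam hsum hβ hcβ)

/-- A monomial square is a degenerate circuit with the single vertex `a`, written as
`(v + 1) x^a + (-1) x^a`. -/
theorem isSONC_monomial {n d : ℕ} {a : Fin n →₀ ℕ} (ha : ∀ i, Even (a i))
    (ha_deg : ∑ i, a i ≤ 2 * d) {v : ℝ} (hv : 0 ≤ v) : IsSONC n d (monomial a v) := by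
  have h := isSONC_circuitPoly (d := d) (Nat.zero_le n) (α := fun (_ : Fin 1) => a) (β := a)
    (c := fun _ => v + 1) (lam := fun _ => 1) (cβ := -1) (fun _ => ha)
    (affineIndependent_of_subsingleton (ι := Fin 1) ℝ _) (fun _ => by positivity) (fun _ => one_pos)
    (by simp) (by simp) (fun _ => ha_deg) (by simp [circuitNumber]; linarith)
  rwa [circuitPoly, Fin.sum_univ_one, Finsupp.equivFunOnFinite_symm_coe, ← map_add,
    add_neg_cancel_right] at h

section SimplexVertices

variable {n d : ℕ}

noncomputable def simplexVertices (n d : ℕ) : Finset (Fin n →₀ ℕ) :=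
  insert 0 (univ.image fun i => Finsupp.single i (2 * d))

theorem mem_simplexVertices {a : Fin n →₀ ℕ} :
    a ∈ simplexVertices n d ↔ a = 0 ∨ ∃ i, a = Finsupp.single i (2 * d) := by
  simp [simplexVertices, eq_comm]

theorem isSONC_monomial_of_mem_simplexVertices {a : Fin n →₀ ℕ} (ha : a ∈ simplexVertices n d)
    {v : ℝ} (hv : 0 ≤ v) : IsSONC n d (monomial a v) := by
  rcases mem_simplexVertices.mp ha with rfl | ⟨i, rfl⟩
  · exact isSONC_monomial (fun _ => Even.zero) (by simp) hv
  · refine isSONC_monomial (fun j => ?_) (Finsupp.univ_sum_single_apply i _).le hv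
    rw [Finsupp.single_apply]
    split_ifs
    exacts [even_two_mul d, Even.zero]

theorem coeff_nonneg_of_mem_simplexVertices {g : MvPolynomial (Fin n) ℝ}
    (hdeg : g.totalDegree ≤ 2 * d) (hg : ∀ x, 0 ≤ eval x g) {a : Fin n →₀ ℕ}
    (ha : a ∈ simplexVertices n d) : 0 ≤ g.coeff a := by
  rcases mem_simplexVertices.mp ha with rfl | ⟨i, rfl⟩
  · simpa [constantCoeff_eq] using hg 0
  · exact coeff_single_nonneg_of_totalDegree_le hdeg hg i

end SimplexVertices

section SimplexCircuit

variable {n r : ℕ} (d : ℕ) (σ : Fin r ↪ Fin n)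

def simplexVertex : Fin (r + 1) → Fin n → ℕ :=
  Fin.cons 0 fun k => Pi.single (σ k) (2 * d)

noncomputable def simplexCircuit (c : Fin (r + 1) → ℝ) (β : Fin n →₀ ℕ) (b : ℝ) :
    MvPolynomial (Fin n) ℝ :=
  C (c 0) + (∑ k : Fin r, monomial (Finsupp.single (σ k) (2 * d)) (c k.succ)) + monomial β b

theorem even_simplexVertex (j : Fin (r + 1)) (i : Fin n) : Even (simplexVertex d σ j i) := by
  induction j using Fin.cases with
  | zero => simp [simplexVertex]
  | succ k =>
    by_cases hi : i = σ k
    · subst hi; simp [simplexVertex]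
    · simp [simplexVertex, Pi.single_eq_of_ne hi]

theorem sum_simplexVertex_le (j : Fin (r + 1)) : ∑ i, simplexVertex d σ j i ≤ 2 * d := by
  induction j using Fin.cases with
  | zero => simp [simplexVertex]
  | succ k => simp [simplexVertex]

@[simp]
theorem simplexVertex_zero : simplexVertex d σ 0 = 0 := rfl

@[simp]
theorem simplexVertex_succ (k : Fin r) : simplexVertex d σ k.succ = Pi.single (σ k) (2 * d) := rfl

theorem simplexVertex_succ_apply (k k' : Fin r) :
    simplexVertex d σ k'.succ (σ k) = if k' = k then 2 * d else 0 := by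
  simp [Pi.single_apply, σ.injective.eq_iff, eq_comm]

theorem affineIndependent_simplexVertex (hd : d ≠ 0) :
    AffineIndependent ℝ fun j i => (simplexVertex d σ j i : ℝ) := by
  rw [affineIndependent_iff_of_fintype]
  intro w hw_sum hw_comb
  rw [univ.weightedVSub_eq_linear_combination hw_sum] at hw_comb
  have hw_succ : ∀ k : Fin r, w k.succ = 0 := fun k => by
    have := congrFun hw_comb (σ k)
    simp only [Finset.sum_apply, Pi.smul_apply, smul_eq_mul, Fin.sum_univ_succ, simplexVertex_zero,
      simplexVertex_succ_apply, Pi.zero_apply, Nat.cast_zero, mul_zero, zero_add, Nat.cast_ite,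
      mul_ite, sum_ite_eq', mem_univ, if_true] at this
    exact (mul_eq_zero.mp this).resolve_right (by positivity)
  intro j
  induction j using Fin.cases with
  | zero => simpa [Fin.sum_univ_succ, hw_succ] using hw_sum
  | succ k => exact hw_succ k

theorem natCast_eq_sum_mul_simplexVertex {lam : Fin (r + 1) → ℝ} {β : Fin n →₀ ℕ}
    (hβ_supp : ∀ i, (∀ k, σ k ≠ i) → β i = 0)
    (hβ_coord : ∀ k, (β (σ k) : ℝ) = 2 * d * lam k.succ) (i : Fin n) :
    (β i : ℝ) = ∑ j, lam j * simplexVertex d σ j i := by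
  rw [Fin.sum_univ_succ, simplexVertex_zero, Pi.zero_apply, Nat.cast_zero, mul_zero, zero_add]
  by_cases hi : ∃ k, σ k = i
  · obtain ⟨k, rfl⟩ := hi
    simp only [simplexVertex_succ_apply, Nat.cast_ite, Nat.cast_zero, mul_ite, mul_zero,
      sum_ite_eq', mem_univ, if_true, hβ_coord]
    push_cast
    ring
  · push Not at hi
    rw [hβ_supp i hi, Nat.cast_zero]
    exact (sum_eq_zero fun k _ => by simp [Pi.single_eq_of_ne (hi k).symm]).symm

theorem circuitPoly_simplexVertex (c : Fin (r + 1) → ℝ) (β : Fin n →₀ ℕ) (b : ℝ) :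
    circuitPoly (simplexVertex d σ) c β b = simplexCircuit d σ c β b := by
  have h₀ : Finsupp.equivFunOnFinite.symm (simplexVertex d σ 0) = 0 := by ext; simp
  simp only [circuitPoly, simplexCircuit, Fin.sum_univ_succ, h₀, simplexVertex_succ,
    Finsupp.equivFunOnFinite_symm_single, Finsupp.equivFunOnFinite_symm_coe, C_apply]

theorem isSONC_simplexCircuit (hd : d ≠ 0) {c lam : Fin (r + 1) → ℝ} (hc : ∀ k, 0 < c k)
    (hlam : ∀ k, 0 < lam k) (hsum : ∑ k, lam k = 1) {β : Fin n →₀ ℕ}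
    (hβ_supp : ∀ i, (∀ k, σ k ≠ i) → β i = 0)
    (hβ_coord : ∀ k, (β (σ k) : ℝ) = 2 * d * lam k.succ) {b : ℝ}
    (hb : |b| ≤ circuitNumber c lam) : IsSONC n d (simplexCircuit d σ c β b) := by
  rw [← circuitPoly_simplexVertex]
  exact isSONC_circuitPoly (by simpa using Fintype.card_le_of_embedding σ)
    (even_simplexVertex d σ) (affineIndependent_simplexVertex d σ hd) hc hlam hsum
    (natCast_eq_sum_mul_simplexVertex d σ hβ_supp hβ_coord) (sum_simplexVertex_le d σ) hb

theorem simplexCircuit_add_monomial (c : Fin (r + 1) → ℝ) (β : Fin n →₀ ℕ) (b e : ℝ) :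
    simplexCircuit d σ c β b + monomial β e = simplexCircuit d σ c β (b + e) := by
  rw [simplexCircuit, simplexCircuit, map_add, add_assoc]

theorem coeff_simplexCircuit_of_ne (c : Fin (r + 1) → ℝ) (β : Fin n →₀ ℕ) (b : ℝ)
    {a : Fin n →₀ ℕ} (ha : a ∉ simplexVertices n d) (haβ : a ≠ β) :
    (simplexCircuit d σ c β b).coeff a = 0 := by
  simp only [mem_simplexVertices, not_or, not_exists] at ha
  obtain ⟨ha₀, ha_vert⟩ := ha
  rw [simplexCircuit, coeff_add, coeff_add, coeff_C, if_neg (Ne.symm ha₀), coeff_sum,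
    coeff_monomial, if_neg (Ne.symm haβ), add_zero, zero_add]
  exact sum_eq_zero fun k _ => by rw [coeff_monomial, if_neg (Ne.symm (ha_vert _))]

end SimplexCircuit

theorem mem_range_of_coeff_sum_simplexCircuit_ne_zero {n d s : ℕ} {r : Fin s → ℕ}
    {σ : (j : Fin s) → Fin (r j) ↪ Fin n} {c : (j : Fin s) → Fin (r j + 1) → ℝ}
    {β : Fin s → Fin n →₀ ℕ} {b : Fin s → ℝ} {a : Fin n →₀ ℕ} (ha : a ∉ simplexVertices n d)
    (hcoeff : (∑ j, simplexCircuit d (σ j) (c j) (β j) (b j)).coeff a ≠ 0) :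
    a ∈ Set.range β := by
  by_contra hβ
  rw [coeff_sum] at hcoeff
  exact hcoeff (sum_eq_zero fun j _ =>
    coeff_simplexCircuit_of_ne d (σ j) _ _ _ ha fun h => hβ ⟨j, h.symm⟩)

theorem isSONC_sum_simplexCircuit_add_sum_monomial {n d s : ℕ} (hd : d ≠ 0) {r : Fin s → ℕ}
    {σ : (j : Fin s) → Fin (r j) ↪ Fin n} {c lam : (j : Fin s) → Fin (r j + 1) → ℝ}
    (hc : ∀ j k, 0 < c j k) (hlam : ∀ j k, 0 < lam j k) (hsum : ∀ j, ∑ k, lam j k = 1)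
    {β : Fin s → Fin n →₀ ℕ} (hβ_supp : ∀ j i, (∀ k, σ j k ≠ i) → β j i = 0)
    (hβ_coord : ∀ j k, (β j (σ j k) : ℝ) = 2 * d * lam j k.succ) (hβ : Function.Injective β)
    {T : Finset (Fin n →₀ ℕ)} (hT : ∀ a ∈ T, a ∈ Set.range β) {b : Fin s → ℝ}
    {e : (Fin n →₀ ℕ) → ℝ} (hb : ∀ j, β j ∉ T → |b j| ≤ circuitNumber (c j) (lam j))
    (hbe : ∀ j, β j ∈ T → |b j + e (β j)| ≤ circuitNumber (c j) (lam j)) :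
    IsSONC n d (∑ j, simplexCircuit d (σ j) (c j) (β j) (b j) + ∑ a ∈ T, monomial a (e a)) := by
  classical
  set P := T.preimage β hβ.injOn
  rw [← sum_preimage β T hβ.injOn _ fun a ha h => absurd (hT a ha) h, ← sum_add_sum_compl P,
    add_right_comm, ← sum_add_distrib]
  refine (IsSONC.sum _ fun j hj => ?_).add (IsSONC.sum _ fun j hj => ?_)
  · rw [simplexCircuit_add_monomial]
    exact isSONC_simplexCircuit d (σ j) hd (hc j) (hlam j) (hsum j) (hβ_supp j) (hβ_coord j)
      (hbe j (mem_preimage.mp hj))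
  · exact isSONC_simplexCircuit d (σ j) hd (hc j) (hlam j) (hsum j) (hβ_supp j) (hβ_coord j)
      (hb j (by simpa [P] using hj))

theorem interior_sonc_perturbation_general (n d s : ℕ) (hd : 1 ≤ d)
    (r : Fin s → ℕ)
    (σ : (j : Fin s) → Fin (r j) ↪ Fin n)
    (c : (j : Fin s) → Fin (r j + 1) → ℝ) (hc : ∀ j k, 0 < c j k)
    (lam : (j : Fin s) → Fin (r j + 1) → ℝ) (hlam : ∀ j k, 0 < lam j k)
    (hlamsum : ∀ j, ∑ k, lam j k = 1)
    (b : Fin s → ℝ)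
    (β : Fin s → (Fin n →₀ ℕ))
    (hβ1 : ∀ j (k : Fin (r j)), ((β j) (σ j k) : ℝ) = 2 * d * lam j k.succ)
    (hβ2 : ∀ j i, (∀ k, σ j k ≠ i) → (β j) i = 0)
    (hβinj : Function.Injective β)
    (Θ : Fin s → ℝ) (hΘ : ∀ j, Θ j = ∏ k, (c j k / lam j k) ^ (lam j k))
    (hinner : ∀ j, |b j| < Θ j)
    (fj : Fin s → MvPolynomial (Fin n) ℝ)
    (hfj : ∀ j, fj j = C (c j 0)
        + (∑ k : Fin (r j), monomial (Finsupp.single (σ j k) (2 * d)) (c j k.succ))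
        + monomial (β j) (b j))
    (f : MvPolynomial (Fin n) ℝ) (hf : f = ∑ j, fj j)
    (hfull : ∀ α : Fin n →₀ ℕ, (α.sum fun _ m => m) ≤ 2 * d → f.coeff α ≠ 0)
    (g : MvPolynomial (Fin n) ℝ) (hgdeg : g.totalDegree ≤ 2 * d)
    (hgnn : ∀ x : Fin n → ℝ, 0 ≤ eval x g)
    (hne : (Finset.univ : Finset (Fin s)).Nonempty)
    (δ : ℝ) (hδ : δ = Finset.univ.inf' hne (fun j => Θ j - |b j|))
    (T : Finset (Fin n →₀ ℕ))
    (hT : ∀ a, a ∈ T ↔ a ∈ g.support ∧ a ≠ 0 ∧ ∀ i : Fin n, a ≠ Finsupp.single i (2 * d))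
    (hTne : T.Nonempty)
    (ε : ℝ) (hε : ε = T.inf' hTne (fun a => δ / (2 * |g.coeff a|))) :
    IsSONC n d (f + C ε * g) := by
  classical
  have hδ_nonneg : 0 ≤ δ := hδ ▸ (le_inf'_iff _ _).2 fun j _ => (sub_pos.2 (hinner j)).le
  have hε_nonneg : 0 ≤ ε := hε ▸ (le_inf'_iff _ _).2 fun a _ => by positivity
  have hf' : f = ∑ j, simplexCircuit d (σ j) (c j) (β j) (b j) :=
    hf.trans (sum_congr rfl fun j _ => hfj j)
  have hT' : ∀ a, a ∈ T ↔ a ∈ g.support ∧ a ∉ simplexVertices n d := by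
    simp [hT, mem_simplexVertices]
  have hT_range : ∀ a ∈ T, a ∈ Set.range β := fun a ha => by
    refine mem_range_of_coeff_sum_simplexCircuit_ne_zero (σ := σ) (c := c) (b := b)
      ((hT' a).mp ha).2 ?_
    rw [← hf']
    exact hfull a ((le_totalDegree ((hT' a).mp ha).1).trans hgdeg)
  have hg_split : C ε * g = ∑ a ∈ T, monomial a (ε * g.coeff a)
      + ∑ a ∈ simplexVertices n d, monomial a (ε * g.coeff a) := by
    rw [congrArg (C ε * ·) (eq_sum_monomial_add_sum_monomial hT'), mul_add, mul_sum, mul_sum]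
    simp only [C_mul_monomial]
  rw [hf', hg_split, ← add_assoc]
  refine (isSONC_sum_simplexCircuit_add_sum_monomial (by omega) hc hlam hlamsum hβ2 hβ1 hβinj
    hT_range (fun j _ => (hinner j).le.trans_eq (hΘ j)) fun j hj => ?_).add
    (IsSONC.sum _ fun a ha => isSONC_monomial_of_mem_simplexVertices ha
      (mul_nonneg hε_nonneg (coeff_nonneg_of_mem_simplexVertices hgdeg hgnn ha)))
  rw [circuitNumber, ← hΘ j]
  exact abs_add_mul_le_of_le_div hε_nonneg (mem_support_iff.mp ((hT' _).mp hj).1)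
    (hε ▸ inf'_le _ hj) (hδ ▸ inf'_le _ (mem_univ j))

/-- Explicit perturbation estimate from the proof of full-dimensionality of
the SONC cone: for the interior SONC polynomial `f = Σ f_j` (with full support in
`Δ_{n,2d}`) and any nonnegative `g` of degree `≤ 2d`, the explicit
`ε = min δ/(2|g_α|)` with `δ = min (Θ(f_j) − |f_{β(j)}|)` yields `f + ε·g ∈ C_{n,2d}`. -/
theorem interior_sonc_perturbation (n d s : ℕ) (hn : 1 ≤ n) (hd : 1 ≤ d) (hs : 0 < s)
    (r : Fin s → ℕ) (hr : ∀ j, r j ≤ n)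
    (σ : (j : Fin s) → Fin (r j) ↪ Fin n)
    (c : (j : Fin s) → Fin (r j + 1) → ℝ) (hc : ∀ j k, 0 < c j k)
    (lam : (j : Fin s) → Fin (r j + 1) → ℝ) (hlam : ∀ j k, 0 < lam j k)
    (hlamsum : ∀ j, ∑ k, lam j k = 1)
    (b : Fin s → ℝ)
    (β : Fin s → (Fin n →₀ ℕ))
    (hβ1 : ∀ j (k : Fin (r j)), ((β j) (σ j k) : ℝ) = 2 * d * lam j k.succ)
    (hβ2 : ∀ j i, (∀ k, σ j k ≠ i) → (β j) i = 0)
    (hβinj : Function.Injective β)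
    (Θ : Fin s → ℝ) (hΘ : ∀ j, Θ j = ∏ k, (c j k / lam j k) ^ (lam j k))
    (hinner : ∀ j, |b j| < Θ j)
    (fj : Fin s → MvPolynomial (Fin n) ℝ)
    (hfj : ∀ j, fj j = C (c j 0)
        + (∑ k : Fin (r j), monomial (Finsupp.single (σ j k) (2 * d)) (c j k.succ))
        + monomial (β j) (b j))
    (f : MvPolynomial (Fin n) ℝ) (hf : f = ∑ j, fj j)
    (hfull : ∀ α : Fin n →₀ ℕ, (α.sum fun _ m => m) ≤ 2 * d → f.coeff α ≠ 0)
    (g : MvPolynomial (Fin n) ℝ) (hgdeg : g.totalDegree ≤ 2 * d)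
    (hgnn : ∀ x : Fin n → ℝ, 0 ≤ eval x g)
    (hne : (Finset.univ : Finset (Fin s)).Nonempty)
    (δ : ℝ) (hδ : δ = Finset.univ.inf' hne (fun j => Θ j - |b j|))
    (T : Finset (Fin n →₀ ℕ))
    (hT : ∀ a, a ∈ T ↔ a ∈ g.support ∧ a ≠ 0 ∧ ∀ i : Fin n, a ≠ Finsupp.single i (2 * d))
    (hTne : T.Nonempty)
    (ε : ℝ) (hε : ε = T.inf' hTne (fun a => δ / (2 * |g.coeff a|))) :
    IsSONC n d (f + C ε * g) :=
  interior_sonc_perturbation_general n d s hd r σ c hc lam hlam hlamsum b β hβ1 hβ2 hβinj Θ hΘ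
    hinner fj hfj f hf hfull g hgdeg hgnn hne δ hδ T hT hTne ε hε
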